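/- arXiv:1001.4885 — 2 statements merged into one kernel-verified Lean document; each statement's English description precedes it below -/
import Mathlib

section
/- For the Kepler system H = p^2/2 − α/r in n dimensions, with A_i = Σ_j P_{ij} p_j − α x_i/r and P^2 = Σ_{i<j} P_{ij}^2, one has the identity Σ_{i=1}^n A_i^2 = 2 P^2 H + α^2. -/
/-- The radius `r = |x|`. -/
noncomputable def rad (n : ℕ) (x : Fin n → ℝ) : ℝ := Real.sqrt (∑ i : Fin n, x i ^ 2)

/-- Kepler Hamiltonian `H = p²/2 − α/r`. -/
noncomputable def kepler (n : ℕ) (α : ℝ) : (Fin n → ℝ) → (Fin n → ℝ) → ℝ :=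
  fun x p => (∑ i : Fin n, p i ^ 2) / 2 - α / rad n x

/-- Laplace–Runge–Lenz functions `A_i = Σ_j P_{ij} p_j − α x_i / r`. -/
noncomputable def lrl (n : ℕ) (α : ℝ) (i : Fin n) : (Fin n → ℝ) → (Fin n → ℝ) → ℝ :=
  fun x p => (∑ j : Fin n, (x i * p j - x j * p i) * p j) - α * x i / rad n x

/-- `P² = Σ_{i<j} P_{ij}²`. -/
def Psq (n : ℕ) : (Fin n → ℝ) → (Fin n → ℝ) → ℝ :=
  fun x p => ∑ i : Fin n, ∑ j : Fin n, if i < j then (x i * p j - x j * p i) ^ 2 else 0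

/-! With `X = |x|²`, `Q = |p|²`, `S = x·p` and `c = α/r`, the vector `A` equals
`(Q - c) x - S p`, so `Σ A_i² = X (Q - c)² - 2 (Q - c) S² + Q S²`, while Lagrange's identity
gives `P² = X Q - S²`. As `H = Q/2 - c`, the two sides differ by `c² X - α²`, which vanishes
since `r² = X` and `r ≠ 0`. -/

namespace Finset

variable {ι R : Type*} [Fintype ι] [CommRing R]

theorem two_mul_sum_sum_ite_lt [LinearOrder ι] (f : ι → ι → R) (hsymm : ∀ i j, f i j = f j i)
    (hdiag : ∀ i, f i i = 0) :
    2 * ∑ i, ∑ j, (if i < j then f i j else 0) = ∑ i, ∑ j, f i j := by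
  have hswap : ∑ i, ∑ j, (if i < j then f i j else 0) = ∑ i, ∑ j, (if j < i then f i j else 0) := by
    rw [sum_comm]
    simp_rw [hsymm]
  rw [two_mul]
  nth_rewrite 2 [hswap]
  simp only [← sum_add_distrib]
  refine sum_congr rfl fun i _ => sum_congr rfl fun j _ => ?_
  rcases lt_trichotomy i j with h | rfl | h
  · simp [h, h.not_gt]
  · simp [hdiag]
  · simp [h, h.not_gt]

theorem sum_sum_mul_sub_mul_sq (a b : ι → R) :
    ∑ i, ∑ j, (a i * b j - a j * b i) ^ 2
      = 2 * ((∑ i, a i ^ 2) * (∑ i, b i ^ 2) - (∑ i, a i * b i) ^ 2) := calc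
  _ = ∑ i, ∑ j, a i ^ 2 * b j ^ 2 + ∑ i, ∑ j, a j ^ 2 * b i ^ 2
        - 2 * ∑ i, ∑ j, a i * b i * (a j * b j) := by
      simp only [mul_sum, ← sum_add_distrib, ← sum_sub_distrib]
      exact sum_congr rfl fun i _ => sum_congr rfl fun j _ => by ring
  _ = _ := by
      rw [sum_comm (f := fun i j => a j ^ 2 * b i ^ 2), sq (∑ i, a i * b i), sum_mul_sum,
        sum_mul_sum]
      ring

theorem sum_mul_sub_mul_sq (c s : R) (a b : ι → R) :
    ∑ i, (a i * c - s * b i) ^ 2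
      = (∑ i, a i ^ 2) * c ^ 2 - 2 * c * s * ∑ i, a i * b i + s ^ 2 * ∑ i, b i ^ 2 := by
  simp only [mul_sum, sum_mul, ← sum_add_distrib, ← sum_sub_distrib]
  refine sum_congr rfl fun i _ => ?_
  ring

end Finset

open Finset

theorem rad_sq (n : ℕ) (x : Fin n → ℝ) : rad n x ^ 2 = ∑ i, x i ^ 2 :=
  Real.sq_sqrt (sum_nonneg fun i _ => sq_nonneg (x i))

theorem rad_ne_zero {n : ℕ} {x : Fin n → ℝ} (hx : x ≠ 0) : rad n x ≠ 0 := by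
  obtain ⟨i, hi⟩ := Function.ne_iff.mp hx
  refine (Real.sqrt_pos.mpr ?_).ne'
  exact sum_pos' (fun j _ => sq_nonneg (x j)) ⟨i, mem_univ i, pow_two_pos_of_ne_zero hi⟩

theorem two_mul_Psq (n : ℕ) (x p : Fin n → ℝ) :
    2 * Psq n x p = 2 * ((∑ i, x i ^ 2) * (∑ i, p i ^ 2) - (∑ i, x i * p i) ^ 2) := by
  rw [← sum_sum_mul_sub_mul_sq, Psq, two_mul_sum_sum_ite_lt]
  · intro i j; ring
  · intro i; ring

theorem lrl_eq (n : ℕ) (α : ℝ) (i : Fin n) (x p : Fin n → ℝ) :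
    lrl n α i x p = x i * (∑ j, p j ^ 2 - α / rad n x) - (∑ j, x j * p j) * p i := by
  have hP : ∑ j, (x i * p j - x j * p i) * p j = x i * ∑ j, p j ^ 2 - (∑ j, x j * p j) * p i := by
    rw [mul_sum, sum_mul, ← sum_sub_distrib]
    exact sum_congr rfl fun j _ => by ring
  rw [lrl, hP]
  ring

theorem stmt_7 (n : ℕ) (α : ℝ) (x p : Fin n → ℝ) (hx : x ≠ 0) :
    ∑ i : Fin n, (lrl n α i x p) ^ 2 = 2 * Psq n x p * kepler n α x p + α ^ 2 := by
  have hα : (α / rad n x) ^ 2 * ∑ i, x i ^ 2 = α ^ 2 := by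
    rw [← rad_sq, div_pow, div_mul_cancel₀ _ (pow_ne_zero 2 (rad_ne_zero hx))]
  simp only [lrl_eq, sum_mul_sub_mul_sq, two_mul_Psq, kepler]
  linear_combination hα
end

section
/- Let A be a skew-symmetric matrix in block-diagonal normal form with 2×2 blocks ((0, α_k), (−α_k, 0)), k = 1,…,s (= ⌊n/2⌋), and a zero 1×1 block if n is odd, where all α_k > 0 are pairwise distinct. Then the image of ad_A : so(n) → so(n), B ↦ [A,B], is exactly the set {B ∈ so(n) : B_{2k−1,2k} = 0 for all k = 1,…,s}, and in particular has dimension n(n−1)/2 − ⌊n/2⌋. -/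
open Matrix

/-- The image of `ad_A` restricted to skew-symmetric matrices: `{[A,B] : B ∈ so(n)}`. -/
def adImage (n : ℕ) (A : Matrix (Fin n) (Fin n) ℝ) :
    Submodule ℝ (Matrix (Fin n) (Fin n) ℝ) where
  carrier := {C | ∃ B, Bᵀ = -B ∧ C = A * B - B * A}
  add_mem' := by
    rintro a b ⟨B1, h1, rfl⟩ ⟨B2, h2, rfl⟩
    refine ⟨B1 + B2, by simp [Matrix.transpose_add, h1, h2, neg_add, add_comm], ?_⟩
    noncomm_ring
  zero_mem' := ⟨0, by simp, by simp⟩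
  smul_mem' := by
    rintro c a ⟨B, h, rfl⟩
    exact ⟨c • B, by simp [Matrix.transpose_smul, h], by
      rw [Matrix.mul_smul, Matrix.smul_mul, smul_sub]⟩

/-!
Let `σ` swap `2k ↔ 2k + 1` (fixing the last index when `n` is odd) and `c i = A i (σ i)`. Then `A`
is supported on the graph of `σ`, so `[A, B] i j = c i * B (σ i) j + c j * B i (σ j)`; for skew `B`
this vanishes at `(i, σ i)`. Conversely, the entries `(σ i, j)` and `(i, σ j)` of `B` enter a 2×2
system with determinant `c j ^ 2 - c i ^ 2`, which is nonzero whenever `i` and `j` lie in different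
blocks because the `α k` are positive and distinct; solving it shows that every skew `C` vanishing
at all `(i, σ i)` is a commutator. Such `C` are determined freely by their entries above the
diagonal and off the blocks, of which there are `n(n-1)/2 - ⌊n/2⌋`.
-/

open Finset

namespace SkewAd

section SkewSymmetric

variable {R : Type*} [AddGroup R] {ι : Type*} {C : Matrix ι ι R}

lemma apply_eq_neg_apply_of_transpose_eq_neg (hC : Cᵀ = -C) (i j : ι) : C i j = -C j i := by
  simpa using congrFun (congrFun hC j) i

lemma apply_self_eq_zero_of_transpose_eq_neg [IsAddTorsionFree R] (hC : Cᵀ = -C) (i : ι) :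
    C i i = 0 :=
  self_eq_neg.mp (apply_eq_neg_apply_of_transpose_eq_neg hC i i)

end SkewSymmetric

section Involution

variable {R ι : Type*} [CommRing R] [Fintype ι] {σ : ι → ι} {A : Matrix ι ι R}

lemma transpose_commutator_eq_neg {B : Matrix ι ι R} (hA : Aᵀ = -A) (hB : Bᵀ = -B) :
    (A * B - B * A)ᵀ = -(A * B - B * A) := by
  rw [transpose_sub, transpose_mul, transpose_mul, hA, hB]
  noncomm_ring

lemma mul_apply_of_support_left (hsupp : ∀ i j, j ≠ σ i → A i j = 0) (B : Matrix ι ι R)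
    (i j : ι) : (A * B) i j = A i (σ i) * B (σ i) j := by
  rw [mul_apply, sum_eq_single (σ i) (fun k _ hk => by rw [hsupp i k hk, zero_mul]) (by simp)]

lemma mul_apply_of_support_right (hσ : Function.Involutive σ)
    (hsupp : ∀ i j, j ≠ σ i → A i j = 0) (B : Matrix ι ι R) (i j : ι) :
    (B * A) i j = B i (σ j) * A (σ j) j := by
  rw [mul_apply, sum_eq_single (σ j)
    (fun k _ hk => by rw [hsupp k j (fun h => hk (by rw [h, hσ])), mul_zero]) (by simp)]

lemma commutator_apply (hσ : Function.Involutive σ) (hA : Aᵀ = -A)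
    (hsupp : ∀ i j, j ≠ σ i → A i j = 0) (B : Matrix ι ι R) (i j : ι) :
    (A * B - B * A) i j = A i (σ i) * B (σ i) j + A j (σ j) * B i (σ j) := by
  rw [Matrix.sub_apply, mul_apply_of_support_left hsupp, mul_apply_of_support_right hσ hsupp,
    apply_eq_neg_apply_of_transpose_eq_neg hA (σ j) j]
  ring

lemma commutator_apply_involution [IsAddTorsionFree R] (hσ : Function.Involutive σ)
    (hA : Aᵀ = -A) (hsupp : ∀ i j, j ≠ σ i → A i j = 0) {B : Matrix ι ι R} (hB : Bᵀ = -B)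
    (i : ι) : (A * B - B * A) i (σ i) = 0 := by
  rw [commutator_apply hσ hA hsupp, hσ, apply_eq_neg_apply_of_transpose_eq_neg hA (σ i) i,
    apply_self_eq_zero_of_transpose_eq_neg hB, apply_self_eq_zero_of_transpose_eq_neg hB]
  ring

end Involution

section Preimage

variable {K ι : Type*} [Field K] {σ : ι → ι} {A : Matrix ι ι K}

/-- With `c i = A i (σ i)`, every `C = A * B - B * A` satisfies
`c i * C (σ i) j - c j * C i (σ j) = (c j ^ 2 - c i ^ 2) * B i j`. On the blocks `j ∈ {i, σ i}`
the denominator vanishes and the entry is `0`. -/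
def commutatorPreimage (σ : ι → ι) (A C : Matrix ι ι K) : Matrix ι ι K :=
  of fun i j =>
    (A i (σ i) * C (σ i) j - A j (σ j) * C i (σ j)) / (A j (σ j) ^ 2 - A i (σ i) ^ 2)

lemma transpose_commutatorPreimage {C : Matrix ι ι K} (hC : Cᵀ = -C) :
    (commutatorPreimage σ A C)ᵀ = -commutatorPreimage σ A C := by
  ext i j
  simp only [transpose_apply, Matrix.neg_apply, commutatorPreimage, of_apply]
  rw [apply_eq_neg_apply_of_transpose_eq_neg hC (σ j) i,
    apply_eq_neg_apply_of_transpose_eq_neg hC j (σ i), ← neg_sub (A j (σ j) ^ 2), div_neg]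
  ring

lemma commutator_commutatorPreimage [Fintype ι] [CharZero K] (hσ : Function.Involutive σ)
    (hA : Aᵀ = -A) (hsupp : ∀ i j, j ≠ σ i → A i j = 0)
    (hsep : ∀ i j, j ≠ i → j ≠ σ i → A i (σ i) ^ 2 ≠ A j (σ j) ^ 2)
    {C : Matrix ι ι K} (hC : Cᵀ = -C) (hCσ : ∀ i, C i (σ i) = 0) :
    A * commutatorPreimage σ A C - commutatorPreimage σ A C * A = C := by
  have hσσ : ∀ k, σ (σ k) = k := hσ
  have hAσ (k : ι) : A (σ k) k = -A k (σ k) := apply_eq_neg_apply_of_transpose_eq_neg hA _ _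
  ext i j
  rw [commutator_apply hσ hA hsupp]
  simp only [commutatorPreimage, of_apply, hσσ, hAσ, neg_sq]
  by_cases hblock : j = i ∨ j = σ i
  · rcases hblock with rfl | rfl
    · simp [apply_self_eq_zero_of_transpose_eq_neg hC]
    · simp [hσσ, hAσ, hCσ]
  · obtain ⟨hji, hjσi⟩ := not_or.mp hblock
    have hD : A j (σ j) ^ 2 - A i (σ i) ^ 2 ≠ 0 := sub_ne_zero.mpr (hsep i j hji hjσi).symm
    field_simp
    ring

theorem exists_commutator_eq_iff [Fintype ι] [CharZero K] (hσ : Function.Involutive σ)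
    (hA : Aᵀ = -A) (hsupp : ∀ i j, j ≠ σ i → A i j = 0)
    (hsep : ∀ i j, j ≠ i → j ≠ σ i → A i (σ i) ^ 2 ≠ A j (σ j) ^ 2) (C : Matrix ι ι K) :
    (∃ B, Bᵀ = -B ∧ C = A * B - B * A) ↔ Cᵀ = -C ∧ ∀ i, C i (σ i) = 0 := by
  constructor
  · rintro ⟨B, hB, rfl⟩
    exact ⟨transpose_commutator_eq_neg hA hB, commutator_apply_involution hσ hA hsupp hB⟩
  · rintro ⟨hC, hCσ⟩
    exact ⟨_, transpose_commutatorPreimage hC,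
      (commutator_commutatorPreimage hσ hA hsupp hsep hC hCσ).symm⟩

end Preimage

section Dimension

variable {K ι : Type*} [Field K] [Fintype ι] [LinearOrder ι] {σ : ι → ι}

def upperOffBlockPairs (σ : ι → ι) : Finset (ι × ι) :=
  {p | p.1 < p.2 ∧ p.2 ≠ σ p.1}

lemma mem_upperOffBlockPairs {p : ι × ι} :
    p ∈ upperOffBlockPairs σ ↔ p.1 < p.2 ∧ p.2 ≠ σ p.1 := by
  simp [upperOffBlockPairs]

def upperExtend (σ : ι → ι) : (upperOffBlockPairs σ → K) →ₗ[K] Matrix ι ι K :=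
  LinearMap.pi fun i => LinearMap.pi fun j =>
    if h : (i, j) ∈ upperOffBlockPairs σ then LinearMap.proj ⟨(i, j), h⟩ else 0

lemma upperExtend_apply (f : upperOffBlockPairs σ → K) (i j : ι) :
    upperExtend σ f i j = if h : (i, j) ∈ upperOffBlockPairs σ then f ⟨(i, j), h⟩ else 0 :=
  apply_dite (fun g : (upperOffBlockPairs σ → K) →ₗ[K] K => g f) _ _ _

lemma upperExtend_apply_of_not_lt (f : upperOffBlockPairs σ → K) {i j : ι} (h : ¬i < j) :
    upperExtend σ f i j = 0 := by
  rw [upperExtend_apply, dif_neg fun hp => h (mem_upperOffBlockPairs.mp hp).1]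

def skewOfUpper (σ : ι → ι) : (upperOffBlockPairs σ → K) →ₗ[K] Matrix ι ι K :=
  upperExtend σ - (transposeLinearEquiv ι ι K K).toLinearMap ∘ₗ upperExtend σ

lemma skewOfUpper_apply (f : upperOffBlockPairs σ → K) (i j : ι) :
    skewOfUpper σ f i j = upperExtend σ f i j - upperExtend σ f j i := rfl

lemma skewOfUpper_injective : Function.Injective (skewOfUpper (K := K) σ) := by
  intro f g hfg
  funext ⟨⟨i, j⟩, hp⟩
  have hji : ¬j < i := (mem_upperOffBlockPairs.mp hp).1.not_gt
  have := congrFun (congrFun hfg i) j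
  rwa [skewOfUpper_apply, skewOfUpper_apply, upperExtend_apply_of_not_lt _ hji,
    upperExtend_apply_of_not_lt _ hji, sub_zero, sub_zero, upperExtend_apply, upperExtend_apply,
    dif_pos hp, dif_pos hp] at this

lemma transpose_skewOfUpper (f : upperOffBlockPairs σ → K) :
    (skewOfUpper σ f)ᵀ = -skewOfUpper σ f := by
  simp [skewOfUpper]

lemma skewOfUpper_apply_involution (hσ : Function.Involutive σ) (f : upperOffBlockPairs σ → K)
    (i : ι) : skewOfUpper σ f i (σ i) = 0 := by
  rw [skewOfUpper_apply, upperExtend_apply, upperExtend_apply, dif_neg, dif_neg, sub_zero]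
  · simp [mem_upperOffBlockPairs, hσ i]
  · simp [mem_upperOffBlockPairs]

lemma upperExtend_restrict {C : Matrix ι ι K} (hCσ : ∀ i, C i (σ i) = 0) (i j : ι) :
    upperExtend σ (fun p => C p.1.1 p.1.2) i j = if i < j then C i j else 0 := by
  simp only [upperExtend_apply, mem_upperOffBlockPairs, dite_eq_ite]
  split_ifs <;> simp_all

lemma skewOfUpper_restrict [CharZero K] {C : Matrix ι ι K} (hC : Cᵀ = -C)
    (hCσ : ∀ i, C i (σ i) = 0) : skewOfUpper σ (fun p => C p.1.1 p.1.2) = C := by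
  ext i j
  rw [skewOfUpper_apply, upperExtend_restrict hCσ, upperExtend_restrict hCσ]
  rcases lt_trichotomy i j with h | rfl | h
  · simp [h, h.not_gt]
  · simp [apply_self_eq_zero_of_transpose_eq_neg hC]
  · simp [h, h.not_gt, apply_eq_neg_apply_of_transpose_eq_neg hC i j]

lemma mem_range_skewOfUpper_iff [CharZero K] (hσ : Function.Involutive σ) {C : Matrix ι ι K} :
    C ∈ LinearMap.range (skewOfUpper σ) ↔ Cᵀ = -C ∧ ∀ i, C i (σ i) = 0 := by
  constructor
  · rintro ⟨f, rfl⟩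
    exact ⟨transpose_skewOfUpper f, skewOfUpper_apply_involution hσ f⟩
  · rintro ⟨hC, hCσ⟩
    exact ⟨_, skewOfUpper_restrict hC hCσ⟩

lemma finrank_range_skewOfUpper (σ : ι → ι) :
    Module.finrank K (LinearMap.range (skewOfUpper (K := K) σ)) = #(upperOffBlockPairs σ) := by
  rw [LinearMap.finrank_range_of_inj skewOfUpper_injective, Module.finrank_fintype_fun_eq_card,
    Fintype.card_coe]

lemma card_upperOffBlockPairs (σ : ι → ι) :
    #(upperOffBlockPairs σ) = (Fintype.card ι).choose 2 - #{i | i < σ i} := by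
  have hsplit := card_filter_add_card_filter_not
    (s := {p ∈ (univ : Finset ι) ×ˢ univ | p.1 < p.2}) (fun p => p.2 = σ p.1)
  rw [card_product_filter_lt, card_univ, filter_filter, filter_filter, univ_product_univ] at hsplit
  have hgraph : #{p : ι × ι | p.1 < p.2 ∧ p.2 = σ p.1} = #{i | i < σ i} := by
    refine card_nbij' Prod.fst (fun i => (i, σ i)) ?_ (fun i hi => by simpa using hi) ?_
      (fun i _ => rfl) <;>
    · rintro ⟨a, b⟩ hp
      obtain ⟨hab, rfl⟩ : a < b ∧ b = σ a := by simpa using hp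
      simp [hab]
  simp only [upperOffBlockPairs, ne_eq]
  omega

end Dimension

section NormalForm

variable {n : ℕ}

def pairSwap (n : ℕ) (i : Fin n) : Fin n :=
  if h : i.val % 2 = 0 ∧ i.val + 1 < n then ⟨i.val + 1, h.2⟩
  else if i.val % 2 = 1 then ⟨i.val - 1, by omega⟩ else i

lemma val_pairSwap (i : Fin n) : (pairSwap n i).val =
    if i.val % 2 = 0 ∧ i.val + 1 < n then i.val + 1
    else if i.val % 2 = 1 then i.val - 1 else i.val := by
  unfold pairSwap
  split_ifs <;> rfl

lemma pairSwap_involutive : Function.Involutive (pairSwap n) := fun i =>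
  Fin.ext (by simp only [val_pairSwap]; split_ifs <;> omega)

lemma val_pairSwap_div_two (i : Fin n) : (pairSwap n i).val / 2 = i.val / 2 := by
  rw [val_pairSwap]
  split_ifs <;> omega

lemma eq_or_eq_pairSwap_of_div_two_eq {i j : Fin n} (h : i.val / 2 = j.val / 2) :
    j = i ∨ j = pairSwap n i := by
  have := j.isLt
  simp only [Fin.ext_iff, val_pairSwap]
  split_ifs <;> omega

lemma card_filter_lt_pairSwap : #{i : Fin n | i < pairSwap n i} = n / 2 := by
  rw [← Nat.card_multiples n 2]
  refine card_bij (fun i _ => i.val + 1) (fun i hi => ?_) (fun i _ j _ h => Fin.ext (by omega))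
    (fun e he => ?_)
  · simp only [mem_filter, mem_univ, true_and, Fin.lt_def, val_pairSwap] at hi
    simp only [mem_filter, mem_range]
    split_ifs at hi <;> omega
  · simp only [mem_filter, mem_range] at he
    refine ⟨⟨e - 1, by omega⟩, ?_, by simp only; omega⟩
    simp only [mem_filter, mem_univ, true_and, Fin.lt_def, val_pairSwap]
    split_ifs <;> omega

lemma forall_apply_pairSwap_eq_zero_iff {R : Type*} [AddGroup R] [IsAddTorsionFree R]
    {C : Matrix (Fin n) (Fin n) R} (hC : Cᵀ = -C) :
    (∀ i, C i (pairSwap n i) = 0) ↔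
      ∀ i j : Fin n, i.val % 2 = 0 → j.val = i.val + 1 → C i j = 0 := by
  constructor
  · intro h i j hi hj
    obtain rfl : j = pairSwap n i := Fin.ext (by rw [val_pairSwap, if_pos ⟨hi, hj ▸ j.isLt⟩, hj])
    exact h i
  · intro h i
    have hval := val_pairSwap i
    split_ifs at hval with hnext hodd
    · exact h i _ hnext.1 hval
    · rw [apply_eq_neg_apply_of_transpose_eq_neg hC, h _ i (by omega) (by omega), neg_zero]
    · rw [show pairSwap n i = i from Fin.ext hval, apply_self_eq_zero_of_transpose_eq_neg hC]

def skewNormalForm {R : Type*} [Ring R] (n : ℕ) (α : ℕ → R) : Matrix (Fin n) (Fin n) R :=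
  of fun i j => if i.val % 2 = 0 ∧ j.val = i.val + 1 then α (i.val / 2)
    else if j.val % 2 = 0 ∧ i.val = j.val + 1 then -α (j.val / 2) else 0

variable {R : Type*} [Ring R] (α : ℕ → R)

lemma transpose_skewNormalForm : (skewNormalForm n α)ᵀ = -skewNormalForm n α := by
  ext i j
  simp only [transpose_apply, Matrix.neg_apply, skewNormalForm, of_apply]
  split_ifs <;> first | omega | simp

lemma skewNormalForm_apply_of_ne_pairSwap {i j : Fin n} (h : j ≠ pairSwap n i) :
    skewNormalForm n α i j = 0 := by
  have := j.isLt
  simp only [ne_eq, Fin.ext_iff, val_pairSwap] at h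
  simp only [skewNormalForm, of_apply]
  split_ifs at h ⊢ <;> first | rfl | omega

lemma skewNormalForm_apply_pairSwap_sq (i : Fin n) :
    skewNormalForm n α i (pairSwap n i) ^ 2 =
      if i.val / 2 < n / 2 then α (i.val / 2) ^ 2 else 0 := by
  have hval := val_pairSwap i
  simp only [skewNormalForm, of_apply, val_pairSwap_div_two]
  split_ifs at hval ⊢ <;> first | omega | simp

lemma skewNormalForm_apply_pairSwap_sq_ne [LinearOrder R] [IsStrictOrderedRing R] {α : ℕ → R}
    (hpos : ∀ k, k < n / 2 → 0 < α k)
    (hdist : ∀ k l, k < n / 2 → l < n / 2 → k ≠ l → α k ≠ α l)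
    {i j : Fin n} (hji : j ≠ i) (hjσ : j ≠ pairSwap n i) :
    skewNormalForm n α i (pairSwap n i) ^ 2 ≠ skewNormalForm n α j (pairSwap n j) ^ 2 := by
  have hblock : i.val / 2 ≠ j.val / 2 :=
    fun h => (eq_or_eq_pairSwap_of_div_two_eq h).elim hji hjσ
  rw [skewNormalForm_apply_pairSwap_sq, skewNormalForm_apply_pairSwap_sq]
  split_ifs with hi hj hj
  · exact fun h => hdist _ _ hi hj hblock
      ((pow_left_inj₀ (hpos _ hi).le (hpos _ hj).le two_ne_zero).mp h)
  · exact (pow_pos (hpos _ hi) 2).ne'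
  · exact (pow_pos (hpos _ hj) 2).ne
  · have := i.isLt
    have := j.isLt
    omega

end NormalForm

end SkewAd

open SkewAd

theorem stmt_16 (n : ℕ) (α : ℕ → ℝ) (A : Matrix (Fin n) (Fin n) ℝ)
    (hA : ∀ i j : Fin n, A i j =
      if i.val % 2 = 0 ∧ j.val = i.val + 1 then α (i.val / 2)
      else if j.val % 2 = 0 ∧ i.val = j.val + 1 then -α (j.val / 2) else 0)
    (hpos : ∀ k, k < n / 2 → 0 < α k)
    (hdist : ∀ k l, k < n / 2 → l < n / 2 → k ≠ l → α k ≠ α l) :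
    (∀ C : Matrix (Fin n) (Fin n) ℝ,
        (∃ B, Bᵀ = -B ∧ C = A * B - B * A) ↔
        (Cᵀ = -C ∧ ∀ i j : Fin n, i.val % 2 = 0 → j.val = i.val + 1 → C i j = 0)) ∧
    Module.finrank ℝ (adImage n A) = n * (n - 1) / 2 - n / 2 := by
  obtain rfl : A = skewNormalForm n α := ext hA
  have hσ : Function.Involutive (pairSwap n) := pairSwap_involutive
  have hmem (C : Matrix (Fin n) (Fin n) ℝ) := exists_commutator_eq_iff hσ
    (transpose_skewNormalForm α) (fun _ _ => skewNormalForm_apply_of_ne_pairSwap α)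
    (fun _ _ => skewNormalForm_apply_pairSwap_sq_ne hpos hdist) C
  have himage :
      adImage n (skewNormalForm n α) = LinearMap.range (skewOfUpper (pairSwap n)) := by
    ext C
    exact (hmem C).trans (mem_range_skewOfUpper_iff hσ).symm
  refine ⟨fun C => (hmem C).trans (and_congr_right forall_apply_pairSwap_eq_zero_iff), ?_⟩
  rw [himage, finrank_range_skewOfUpper, card_upperOffBlockPairs, Fintype.card_fin,
    card_filter_lt_pairSwap, Nat.choose_two_right]
end
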